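/- arXiv:math/0307064 — 2 statements merged into one kernel-verified Lean document; each statement's English description precedes it below -/
import Mathlib

section
/- For every n ≥ 1, the hierarchical-ordering numbers satisfy the recurrence H_n = ∑_{k=1}^{n} C(n−1, k−1) · B_k · H_{n−k}, where C(·,·) denotes the binomial coefficient. -/
open Finset PowerSeries Filter Nat

/-- `L` is an ordered set partition of the finite set `S`: a finite sequence of pairwise
disjoint nonempty subsets of `S` whose union is `S`. -/
def IsOrderedSetPartition {α : Type*} [DecidableEq α] (S : Finset α) (L : List (Finset α)) :
    Prop :=
  (∀ T ∈ L, T ≠ ∅) ∧ L.Pairwise Disjoint ∧ L.foldr (· ∪ ·) ∅ = S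

/-- The type of ordered set partitions of the finite set `S`. -/
def OrderedSetPartition {α : Type*} [DecidableEq α] (S : Finset α) :=
  {L : List (Finset α) // IsOrderedSetPartition S L}

/-- The ordered Bell number `B n`: the number of ordered set partitions of an `n`-element set. -/
noncomputable def orderedBell (n : ℕ) : ℕ :=
  Nat.card (OrderedSetPartition (Finset.univ : Finset (Fin n)))

/-- A hierarchical ordering (society) on the finite set `S`: an (unordered) set partition of `S`
into nonempty blocks, together with an ordered set partition of each block. -/
def HierarchicalOrdering {α : Type*} [DecidableEq α] (S : Finset α) :=
  (P : Finpartition S) × ((b : P.parts) → OrderedSetPartition (b : Finset α))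

/-- `H n`: the number of hierarchical orderings on an `n`-element set. -/
noncomputable def hier (n : ℕ) : ℕ :=
  Nat.card (HierarchicalOrdering (Finset.univ : Finset (Fin n)))

/-!
Classify hierarchical orderings of `S` by the block `T` containing a fixed point `x ∈ S`:
removing that block (`Finpartition.avoid`) and putting it back (`Finpartition.extend`) are
inverse, so the count for `S` is the sum over `T ∋ x` of `B_{|T|}` times the count for `S \ T`,
and there are `C(|S| - 1, k - 1)` such `T` of size `k`. Instead of transporting partitions
along bijections to see that the count depends only on `|S|`, note that this recurrence in `|S|`
determines it: by strong induction the count for every finite set `S` is `hierRec |S|`, where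
`hierRec` is the solution of the recurrence. In particular it is `hier |S|`.
-/

section OrderedSetPartition

variable {α β : Type*} [DecidableEq α] [DecidableEq β]

lemma map_foldr_union (f : α ↪ β) (L : List (Finset α)) :
    (L.map (Finset.map f)).foldr (· ∪ ·) ∅ = (L.foldr (· ∪ ·) ∅).map f := by
  induction L with
  | nil => rfl
  | cons T L ih => simp [ih, map_union]

lemma subset_foldr_union {L : List (Finset α)} {T : Finset α} (hT : T ∈ L) :
    T ⊆ L.foldr (· ∪ ·) ∅ := by
  induction L with
  | nil => simp at hT
  | cons U L ih =>
    rcases List.mem_cons.1 hT with rfl | hT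
    · exact subset_union_left
    · exact (ih hT).trans subset_union_right

lemma isOrderedSetPartition_map_iff (f : α ↪ β) {S : Finset α} {L : List (Finset α)} :
    IsOrderedSetPartition (S.map f) (L.map (Finset.map f)) ↔ IsOrderedSetPartition S L := by
  simp only [IsOrderedSetPartition, List.forall_mem_map, ne_eq, Finset.map_eq_empty,
    List.pairwise_map, Finset.disjoint_map, map_foldr_union, Finset.map_inj]

lemma IsOrderedSetPartition.subset_of_mem {S : Finset α} {L : List (Finset α)}
    (h : IsOrderedSetPartition S L) {T : Finset α} (hT : T ∈ L) : T ⊆ S :=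
  h.2.2 ▸ subset_foldr_union hT

lemma IsOrderedSetPartition.nodup {S : Finset α} {L : List (Finset α)}
    (h : IsOrderedSetPartition S L) : L.Nodup := by
  refine h.2.1.imp_of_mem fun {T U} hT _ hd hTU => ?_
  subst hTU
  exact h.1 T hT (disjoint_self.1 hd)

instance [Fintype α] (S : Finset α) : Finite (OrderedSetPartition S) :=
  Finite.of_injective
    (fun L : OrderedSetPartition S => (⟨L.1, L.2.nodup⟩ : {l : List (Finset α) // l.Nodup}))
    fun _ _ h => Subtype.ext (congrArg Subtype.val h :)

omit [DecidableEq α] [DecidableEq β] in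
lemma Finset.map_preimage_of_subset_map (f : α ↪ β) {S : Finset α} {T : Finset β}
    (h : T ⊆ S.map f) : (T.preimage f f.injective.injOn).map f = T := by
  ext b
  simp only [Finset.mem_map, Finset.mem_preimage]
  constructor
  · rintro ⟨a, ha, rfl⟩; exact ha
  · intro hb
    obtain ⟨a, -, rfl⟩ := Finset.mem_map.1 (h hb)
    exact ⟨a, hb, rfl⟩

theorem card_orderedSetPartition_map (f : α ↪ β) (S : Finset α) :
    Nat.card (OrderedSetPartition (S.map f)) = Nat.card (OrderedSetPartition S) := by
  refine (Nat.card_eq_of_bijective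
    (fun L => ⟨L.1.map (Finset.map f), (isOrderedSetPartition_map_iff f).2 L.2⟩)
    ⟨?_, ?_⟩).symm
  · exact fun L M h => Subtype.ext <| (List.map_injective_iff.2 (Finset.map_injective f))
      (Subtype.ext_iff.1 h)
  · intro M
    have hM : (M.1.map (·.preimage f f.injective.injOn)).map (Finset.map f) = M.1 := by
      rw [List.map_map]
      exact (List.map_congr_left fun T hT =>
        Finset.map_preimage_of_subset_map f (M.2.subset_of_mem hT)).trans M.1.map_id
    exact ⟨⟨_, (isOrderedSetPartition_map_iff f).1 (by rw [hM]; exact M.2)⟩, Subtype.ext hM⟩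

theorem card_orderedSetPartition (S : Finset α) :
    Nat.card (OrderedSetPartition S) = orderedBell #S := by
  let g : Fin #S ↪ α := S.equivFin.symm.toEmbedding.trans (Function.Embedding.subtype _)
  have hg : univ.map g = S := by
    rw [← Finset.map_map, map_univ_equiv, univ_eq_attach, attach_map_val]
  conv_lhs => rw [← hg]
  exact card_orderedSetPartition_map g univ

end OrderedSetPartition

namespace Finpartition

variable {α : Type*} [DecidableEq α] {S T : Finset α}

lemma parts_avoid_of_mem (P : Finpartition S) (hT : T ∈ P.parts) :
    (P.avoid T).parts = P.parts.erase T := by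
  ext U
  rw [mem_avoid, mem_erase]
  constructor
  · rintro ⟨V, hV, hVT, rfl⟩
    have hne : V ≠ T := fun h => hVT h.le
    have hdisj : Disjoint V T := P.disjoint hV hT hne
    rw [sdiff_eq_self_of_disjoint hdisj]
    exact ⟨hne, hV⟩
  · rintro ⟨hne, hU⟩
    have hdisj : Disjoint U T := P.disjoint hU hT hne
    refine ⟨U, hU, fun hle => P.bot_notMem ?_, sdiff_eq_self_of_disjoint hdisj⟩
    rwa [← hdisj.eq_bot_of_le hle]

variable {R : Type*} [CommSemiring R]

theorem sum_prod_parts_of_mem_parts (w : Finset α → R) (hTS : T ⊆ S) (hT : T.Nonempty) :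
    ∑ P : Finpartition S with T ∈ P.parts, ∏ b ∈ P.parts, w b =
      w T * ∑ Q : Finpartition (S \ T), ∏ b ∈ Q.parts, w b := by
  have hsup : (S \ T) ⊔ T = S := sdiff_union_of_subset hTS
  have hT_notMem : ∀ Q : Finpartition (S \ T), T ∉ Q.parts := fun Q hTQ => by
    obtain ⟨x, hx⟩ := hT
    exact (mem_sdiff.1 (Q.le hTQ hx)).2 hx
  rw [mul_sum]
  refine sum_nbij' (·.avoid T) (·.extend hT.ne_empty sdiff_disjoint hsup)
    (fun _ _ => mem_univ _) (fun Q _ => by simp) ?_ ?_ ?_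
  · intro P hP
    ext1
    have hTP := (mem_filter.1 hP).2
    rw [extend_parts, parts_avoid_of_mem P hTP, insert_erase hTP]
  · intro Q _
    ext1
    rw [parts_avoid_of_mem _ (by simp), extend_parts, erase_insert (hT_notMem Q)]
  · intro P hP
    rw [parts_avoid_of_mem P (mem_filter.1 hP).2, mul_prod_erase _ _ (mem_filter.1 hP).2]

theorem sum_prod_parts_eq_sum_part {x : α} (hx : x ∈ S) (w : Finset α → R) :
    ∑ P : Finpartition S, ∏ b ∈ P.parts, w b =
      ∑ T ∈ S.powerset with x ∈ T,
        w T * ∑ Q : Finpartition (S \ T), ∏ b ∈ Q.parts, w b := by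
  rw [← sum_fiberwise_of_maps_to (g := fun P : Finpartition S => P.part x)
    (t := S.powerset.filter (x ∈ ·)) fun P _ => by simp [P.part_subset, P.mem_part_self.2 hx]]
  refine sum_congr rfl fun T hT => ?_
  obtain ⟨hTS, hxT⟩ := mem_filter.1 hT
  rw [← sum_prod_parts_of_mem_parts w (mem_powerset.1 hTS) ⟨x, hxT⟩]
  exact sum_congr (filter_congr fun P _ =>
    ⟨fun h => h ▸ P.part_mem.2 hx, fun h => P.part_eq_of_mem h hxT⟩) fun _ _ => rfl

end Finpartition

theorem Finset.sum_powerset_filter_mem_apply_card {α M : Type*} [DecidableEq α]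
    [AddCommMonoid M] {S : Finset α} {x : α} (hx : x ∈ S) (g : ℕ → M) :
    ∑ T ∈ S.powerset with x ∈ T, g #T =
      ∑ j ∈ range #S, (#S - 1).choose j • g (j + 1) := by
  have herase : ∑ T ∈ S.powerset with x ∈ T, g #T =
      ∑ t ∈ (S.erase x).powerset, g (#t + 1) := by
    refine sum_nbij' (·.erase x) (insert x) ?_ ?_ ?_ ?_ ?_ <;>
      simp only [mem_filter, mem_powerset]
    · exact fun T hT => erase_subset_erase x hT.1
    · exact fun t ht => ⟨insert_subset hx (ht.trans (erase_subset x S)), mem_insert_self x t⟩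
    · exact fun T hT => insert_erase hT.2
    · exact fun t ht => erase_insert fun hxt => (notMem_erase x S) (ht hxt)
    · exact fun T hT => by rw [card_erase_add_one hT.2]
  rw [herase, sum_powerset_apply_card (fun k => g (k + 1)), card_erase_of_mem hx,
    Nat.sub_add_cancel (card_pos.2 ⟨x, hx⟩)]

noncomputable def hierRec : ℕ → ℕ
  | 0 => 1
  | m + 1 => ∑ j ∈ range (m + 1), m.choose j * orderedBell (j + 1) * hierRec (m - j)

section HierarchicalOrdering

variable {α : Type*} [DecidableEq α] [Fintype α]

theorem card_hierarchicalOrdering_eq_sum_prod (S : Finset α) :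
    Nat.card (HierarchicalOrdering S) =
      ∑ P : Finpartition S, ∏ b ∈ P.parts, Nat.card (OrderedSetPartition b) := by
  rw [HierarchicalOrdering, Nat.card_sigma]
  refine sum_congr rfl fun P _ => ?_
  rw [Nat.card_pi, ← prod_coe_sort P.parts]

theorem card_hierarchicalOrdering (S : Finset α) :
    Nat.card (HierarchicalOrdering S) = hierRec #S := by
  induction S using Finset.strongInduction with
  | H S ih =>
  rw [card_hierarchicalOrdering_eq_sum_prod]
  obtain rfl | ⟨x, hx⟩ := S.eq_empty_or_nonempty
  · rw [← bot_eq_empty, Fintype.sum_unique, Finpartition.parts_eq_empty_iff.2 rfl, prod_empty,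
      bot_eq_empty, card_empty, hierRec]
  obtain ⟨m, hm⟩ := Nat.exists_eq_succ_of_ne_zero (card_ne_zero_of_mem hx)
  have hblock : ∀ T ∈ S.powerset.filter (x ∈ ·), Nat.card (OrderedSetPartition T) *
      ∑ Q : Finpartition (S \ T), ∏ b ∈ Q.parts, Nat.card (OrderedSetPartition b) =
        orderedBell #T * hierRec (#S - #T) := by
    intro T hT
    obtain ⟨hTS, hxT⟩ := mem_filter.1 hT
    rw [card_orderedSetPartition, ← card_hierarchicalOrdering_eq_sum_prod,
      ih _ (sdiff_ssubset (mem_powerset.1 hTS) ⟨x, hxT⟩),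
      card_sdiff_of_subset (mem_powerset.1 hTS)]
  rw [Finpartition.sum_prod_parts_eq_sum_part hx, sum_congr rfl hblock,
    sum_powerset_filter_mem_apply_card hx (fun k => orderedBell k * hierRec (#S - k)), hm, hierRec]
  simp [mul_assoc]

end HierarchicalOrdering

theorem hier_eq_hierRec (n : ℕ) : hier n = hierRec n := by
  simpa [hier] using card_hierarchicalOrdering (univ : Finset (Fin n))

/-- **Recurrence for `H_n`.** For every `n ≥ 1`,
`H_n = ∑_{k=1}^{n} C(n−1, k−1) · B_k · H_{n−k}`. -/
theorem hier_recurrence (n : ℕ) (hn : 1 ≤ n) :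
    hier n = ∑ k ∈ Finset.Icc 1 n, (n - 1).choose (k - 1) * orderedBell k * hier (n - k) := by
  obtain ⟨m, rfl⟩ := Nat.exists_eq_add_of_le' hn
  rw [hier_eq_hierRec, hierRec, ← Ico_add_one_right_eq_Icc, sum_Ico_eq_sum_range]
  refine sum_congr (by simp) fun j _ => ?_
  simp [add_comm, hier_eq_hierRec]
end

section
/- For every n ≥ 1, the sum over all compositions c = (c_1,…,c_k) of n of the total rank ∑_{j=1}^{k} j · c_j satisfies 4 · ∑_{c} ∑_{j} j·c_j = n·(n+3)·2^{n−1}. Equivalently, the average rank of a uniformly random one of the n elements of a uniformly random composition of n equals (n+3)/4. -/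
/-!
Prepending a part `1` and enlarging the first part give a bijection from two copies of the
compositions of `n + 1` onto the compositions of `n + 2`. The first map raises the rank of each of
the `n + 1` old elements by one and adds an element of rank `1`, so it adds `n + 2` to the total
rank; the second only adds one element of rank `1`. Hence the sums `S n` of total ranks satisfy
`S (n + 2) = 2 S (n + 1) + (n + 3) 2 ^ n`, a recursion the closed form satisfies.
-/

open Finset

theorem List.sum_range_length_getD {M : Type*} [AddCommMonoid M] (l : List M) :
    ∑ i ∈ Finset.range l.length, l.getD i 0 = l.sum := by
  rw [Finset.sum_range, ← List.sum_ofFn]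
  simp

def totalRank (l : List ℕ) : ℕ := ∑ i ∈ range l.length, (i + 1) * l.getD i 0

theorem totalRank_cons (a : ℕ) (l : List ℕ) : totalRank (a :: l) = a + l.sum + totalRank l := by
  simp only [totalRank, List.length_cons, sum_range_succ', List.getD_cons_succ,
    List.getD_cons_zero, add_mul, one_mul, sum_add_distrib, l.sum_range_length_getD]
  ring

theorem totalRank_headI_succ_cons_tail (l : List ℕ) :
    totalRank ((l.headI + 1) :: l.tail) = totalRank l + 1 := by
  cases l with
  | nil => rfl
  | cons a l => simp only [List.headI_cons, List.tail_cons, totalRank_cons]; ring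

namespace Composition

variable {n : ℕ}

def consOne (c : Composition n) : Composition (n + 1) where
  blocks := 1 :: c.blocks
  blocks_pos := by simpa using fun _ => c.blocks_pos
  blocks_sum := by simp [c.blocks_sum, add_comm]

def succHead (c : Composition n) : Composition (n + 1) where
  blocks := (c.blocks.headI + 1) :: c.blocks.tail
  blocks_pos := by simpa using fun _ hi => c.blocks_pos (List.mem_of_mem_tail hi)
  blocks_sum := by rw [List.sum_cons, add_right_comm, List.headI_add_tail_sum, c.blocks_sum]

theorem exists_blocks_eq_cons (c : Composition (n + 1)) :
    ∃ a l, 0 < a ∧ c.blocks = a :: l := by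
  obtain ⟨a, l, h⟩ := List.exists_cons_of_ne_nil (c.blocks_eq_nil.not.2 n.succ_ne_zero)
  exact ⟨a, l, c.blocks_pos (by simp [h]), h⟩

theorem consOne_injective : Function.Injective (consOne : Composition n → _) :=
  fun _ _ h => Composition.ext (List.cons_injective (congrArg blocks h))

theorem succHead_injective : Function.Injective (succHead : Composition (n + 1) → _) := by
  intro c d h
  obtain ⟨a, l, -, hc⟩ := c.exists_blocks_eq_cons
  obtain ⟨b, m, -, hd⟩ := d.exists_blocks_eq_cons
  have hblocks := congrArg blocks h
  simp only [succHead, hc, hd, List.headI_cons, List.tail_cons, List.cons.injEq,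
    Nat.add_right_cancel_iff] at hblocks
  exact Composition.ext (by rw [hc, hd, hblocks.1, hblocks.2])

theorem consOne_ne_succHead (c d : Composition (n + 1)) :
    c.consOne ≠ d.succHead := by
  obtain ⟨a, l, ha, hd⟩ := d.exists_blocks_eq_cons
  intro h
  have hhead := congrArg (fun e => e.blocks.headI) h
  simp only [consOne, succHead, hd, List.headI_cons, List.tail_cons, Nat.right_eq_add] at hhead
  omega

theorem surjective_sumElim_consOne_succHead :
    Function.Surjective
      (Sum.elim consOne succHead : Composition (n + 1) ⊕ Composition (n + 1) → _) := by
  intro d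
  obtain ⟨a, l, ha, hd⟩ := d.exists_blocks_eq_cons
  have hsum : a + l.sum = n + 2 := by rw [← List.sum_cons, ← hd, d.blocks_sum]
  have hl : ∀ i ∈ l, 0 < i := fun i hi => d.blocks_pos (by simp [hd, hi])
  rcases (Nat.one_le_iff_ne_zero.2 ha.ne').eq_or_lt with rfl | ha
  · refine ⟨.inl ⟨l, hl _, by omega⟩, Composition.ext ?_⟩
    simp [consOne, hd]
  · refine ⟨.inr ⟨(a - 1) :: l, ?_, by rw [List.sum_cons]; omega⟩, Composition.ext ?_⟩
    · simpa [ha] using hl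
    · simp only [Sum.elim_inr, succHead, hd, List.headI_cons, List.tail_cons, List.cons.injEq,
        and_true]
      omega

theorem bijective_sumElim_consOne_succHead :
    Function.Bijective
      (Sum.elim consOne succHead : Composition (n + 1) ⊕ Composition (n + 1) → _) :=
  ⟨consOne_injective.sumElim succHead_injective consOne_ne_succHead,
    surjective_sumElim_consOne_succHead⟩

theorem sum_succ_succ {M : Type*} [AddCommMonoid M] (f : Composition (n + 2) → M) :
    ∑ d, f d =
      ∑ c : Composition (n + 1), f c.consOne + ∑ c : Composition (n + 1), f c.succHead := by
  rw [← Fintype.sum_bijective _ bijective_sumElim_consOne_succHead _ f fun _ => rfl,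
    Fintype.sum_sum_type]
  rfl

theorem totalRank_consOne (c : Composition n) :
    totalRank c.consOne.blocks = totalRank c.blocks + (n + 1) := by
  rw [consOne, totalRank_cons, c.blocks_sum]; ring

theorem totalRank_succHead (c : Composition n) :
    totalRank c.succHead.blocks = totalRank c.blocks + 1 :=
  totalRank_headI_succ_cons_tail c.blocks

theorem sum_totalRank_succ_succ :
    ∑ d : Composition (n + 2), totalRank d.blocks =
      2 * ∑ c : Composition (n + 1), totalRank c.blocks + (n + 3) * 2 ^ n := by
  simp only [sum_succ_succ, totalRank_consOne, totalRank_succHead, sum_add_distrib, sum_const,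
    Finset.card_univ, composition_card, smul_eq_mul, Nat.add_sub_cancel]
  ring

end Composition

theorem average_rank_unlabeled_general (n : ℕ) :
    4 * ∑ c : Composition n,
        ∑ i ∈ Finset.range c.blocks.length, (i + 1) * c.blocks.getD i 0 =
      n * (n + 3) * 2 ^ (n - 1) := by
  change 4 * ∑ c : Composition n, totalRank c.blocks = _
  induction n using Nat.twoStepInduction with
  | zero =>
    have (c : Composition 0) : c.blocks = [] := c.blocks_eq_nil.2 rfl
    simp [this, totalRank]
  | one =>
    have (c : Composition 1) : c = Composition.ones 1 :=
      Composition.eq_ones_iff_le_length.2 (c.length_pos_iff.2 one_pos)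
    simp [this, totalRank, composition_card]
  | more n _ ih =>
    rw [Composition.sum_totalRank_succ_succ, mul_add, ← mul_assoc, mul_comm 4 2, mul_assoc, ih]
    rw [show n + 2 - 1 = n + 1 by omega, Nat.add_sub_cancel]
    ring

/-- **Average rank in a random composition.** For `n ≥ 1`, the sum over all compositions
`c = (c_1,…,c_k)` of `n` of the total rank `∑_{j=1}^{k} j·c_j` (the list of blocks is indexed
from `0`, so entry `i` is the `(i+1)`-st part) satisfies
`4·∑_c ∑_j j·c_j = n·(n+3)·2^{n−1}`; equivalently, the average rank of a uniformly random one
of the `n` elements of a uniformly random composition of `n` equals `(n+3)/4`. -/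
theorem average_rank_unlabeled (n : ℕ) (hn : 1 ≤ n) :
    4 * ∑ c : Composition n,
        ∑ i ∈ Finset.range c.blocks.length, (i + 1) * c.blocks.getD i 0 =
      n * (n + 3) * 2 ^ (n - 1) :=
  average_rank_unlabeled_general n
end
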